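/- arXiv:2504.20297 — 2 statements merged into one kernel-verified Lean document; each statement's English description precedes it below -/
import Mathlib

section
/- Let A₇ be the 2-dimensional complex pre-Lie algebra with e₁·e₁ = e₁, e₂·e₂ = e₂ (other products zero). The only Rota–Baxter operator of weight 0 on A₇ is the zero map. -/
noncomputable section

abbrev V : Type := ℂ × ℂ

def mul : V → V → V := fun x y => (x.1*y.1, x.2*y.2)

def e1 : V := (1, 0)
def e2 : V := (0, 1)

lemma smul_e1 (x : ℂ) : x • e1 = ((x, 0) : V) := by simp [e1, Prod.smul_def]

lemma smul_e2 (x : ℂ) : x • e2 = ((0, x) : V) := by simp [e2, Prod.smul_def]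

theorem stmt3 (P : V →ₗ[ℂ] V) :
    (∀ x y : V, mul (P x) (P y) = P (mul (P x) y + mul x (P y))) ↔ P = 0 := by
  constructor
  · intro h
    have h1 := h e1 e1
    have h2 := h e2 e2
    have e1arg : mul (P e1) e1 + mul e1 (P e1) = (2 * (P e1).1) • e1 := by
      rw [smul_e1]; simp [mul, e1, Prod.ext_iff]; ring
    have e2arg : mul (P e2) e2 + mul e2 (P e2) = (2 * (P e2).2) • e2 := by
      rw [smul_e2]; simp [mul, e2, Prod.ext_iff]; ring
    rw [e1arg, map_smul] at h1
    rw [e2arg, map_smul] at h2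
    have h1' : ((P e1).1 * (P e1).1, (P e1).2 * (P e1).2) =
        (2 * (P e1).1 * (P e1).1, 2 * (P e1).1 * (P e1).2) := by
      simpa [mul, Prod.smul_def, Prod.ext_iff, mul_assoc] using h1
    have h2' : ((P e2).1 * (P e2).1, (P e2).2 * (P e2).2) =
        (2 * (P e2).2 * (P e2).1, 2 * (P e2).2 * (P e2).2) := by
      simpa [mul, Prod.smul_def, Prod.ext_iff, mul_assoc] using h2
    obtain ⟨ha, hc⟩ := Prod.ext_iff.mp h1'
    obtain ⟨hb, hd⟩ := Prod.ext_iff.mp h2'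
    have a0 : (P e1).1 = 0 := by
      have : (P e1).1 * (P e1).1 = 0 := by linear_combination -ha
      exact mul_self_eq_zero.mp this
    have c0 : (P e1).2 = 0 := by
      rw [a0] at hc; simpa using hc
    have d0 : (P e2).2 = 0 := by
      have : (P e2).2 * (P e2).2 = 0 := by linear_combination -hd
      exact mul_self_eq_zero.mp this
    have b0 : (P e2).1 = 0 := by
      rw [d0] at hb; simpa using hb
    have Pe1 : P e1 = 0 := Prod.ext a0 c0
    have Pe2 : P e2 = 0 := Prod.ext b0 d0
    apply LinearMap.ext
    intro x
    have hx : (x : V) = x.1 • e1 + x.2 • e2 := by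
      simp [smul_e1, smul_e2, Prod.ext_iff]
    rw [hx]
    simp [Pe1, Pe2]
  · intro h
    subst h
    intro x y
    simp [mul]
end
end

section
/- Each of the eight algebras A₁,…,A₈ (with A₅ and A₆ taken for an arbitrary parameter α ∈ ℂ) defined by the structure constants: A₁: e₁e₁ = e₁+e₂, e₂e₁ = e₂; A₂: e₁e₁ = e₁+e₂, e₁e₂ = e₂; A₃: e₁e₁ = e₂; A₄: e₂e₁ = e₁; A₅^α: e₁e₁ = e₁, e₁e₂ = αe₂; A₆^α: e₁e₁ = e₁, e₁e₂ = αe₂, e₂e₁ = e₂; A₇: e₁e₁ = e₁, e₂e₂ = e₂; A₈: e₁e₁ = e₁, e₁e₂ = 2e₂, e₂e₁ = ½e₁+e₂, e₂e₂ = e₂ (unlisted basis products zero) satisfies the left pre-Lie identity x·(y·z) − (x·y)·z = y·(x·z) − (y·x)·z. -/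
noncomputable section

def mulA1 : V → V → V := fun x y => (x.1*y.1, x.1*y.1 + x.2*y.1)
def mulA2 : V → V → V := fun x y => (x.1*y.1, x.1*y.1 + x.1*y.2)
def mulA3 : V → V → V := fun x y => ((0:ℂ), x.1*y.1)
def mulA4 : V → V → V := fun x y => (x.2*y.1, (0:ℂ))
def mulA5 (α : ℂ) : V → V → V := fun x y => (x.1*y.1, α*(x.1*y.2))
def mulA6 (α : ℂ) : V → V → V := fun x y => (x.1*y.1, α*(x.1*y.2) + x.2*y.1)
def mulA7 : V → V → V := fun x y => (x.1*y.1, x.2*y.2)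
def mulA8 : V → V → V := fun x y => (x.1*y.1 + x.2*y.1/2, 2*x.1*y.2 + x.2*y.1 + x.2*y.2)

def IsPreLie (m : V → V → V) : Prop :=
  ∀ x y z : V, m x (m y z) - m (m x y) z = m y (m x z) - m (m y x) z

theorem stmt19 :
    IsPreLie mulA1 ∧ IsPreLie mulA2 ∧ IsPreLie mulA3 ∧ IsPreLie mulA4 ∧
    (∀ α : ℂ, IsPreLie (mulA5 α)) ∧ (∀ α : ℂ, IsPreLie (mulA6 α)) ∧
    IsPreLie mulA7 ∧ IsPreLie mulA8 := by
  refine ⟨?_, ?_, ?_, ?_, fun α => ?_, fun α => ?_, ?_, ?_⟩ <;>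
    intro x y z <;>
    simp only [mulA1, mulA2, mulA3, mulA4, mulA5, mulA6, mulA7, mulA8, Prod.mk_sub_mk,
      Prod.mk.injEq] <;> constructor <;> (try trivial) <;> ring
end
end
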